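/- arXiv:2308.04246 — 3 statements merged into one kernel-verified Lean document; each statement's English description precedes it below -/
import Mathlib

section
/- (Theorem 1, Y part, deterministic form.) Fix a finite index set I = I1 ∪ I2, reals σ² > 0, γ1, γ2, λ_j with 1 + γ1 λ_j ≠ 0 (j ∈ I1) and 1 + γ2 λ_j ≠ 0 (j ∈ I2), and constants a_j, β_j (j ∈ I); set b_j = β_j². Let M_n → ∞ and for each n let {u_j^{(n)}}_{j∈I} and {v_j^{(n)}}_{j∈I} be orthonormal families in ℝ^{M_n}. Assume, as n → ∞ and for all j, k, l ∈ I: (i) 1_{M_n}ᵀ u_j^{(n)} u_j^{(n)ᵀ} 1_{M_n}/M_n → a_j b_j; (ii) v_k^{(n)ᵀ} u_j^{(n)} u_j^{(n)ᵀ} v_l^{(n)} → a_j if k = l = j and → 0 otherwise; (iii) 1_{M_n}ᵀ u_j^{(n)} u_j^{(n)ᵀ} v_k^{(n)}/√M_n → a_j β_j if k = j and → 0 otherwise; (iv) 1_{M_n}ᵀ v_j^{(n)}/√M_n → β_j. Let Σ_n = σ²(I_{M_n} + Σ_{j∈I} λ_j v_j^{(n)} v_j^{(n)ᵀ}) and C̃_n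 = (I_{M_n} + γ1 Σ_{j∈I1} λ_j u_j^{(n)} u_j^{(n)ᵀ} + γ2 Σ_{j∈I2} λ_j u_j^{(n)} u_j^{(n)ᵀ})⁻¹. Then Y_n := (1_{M_n}ᵀ C̃_n Σ_n C̃_n 1_{M_n})/M_n converges to Ȳ(γ1,γ2) := σ²( 1 + Σ_{j∈I} λ_j b_j − 2 Σ_{i=1,2} Σ_{j∈I_i} (λ_j + 1) a_j b_j γ_{i,j} + Σ_{i=1,2} Σ_{j∈I_i} a_j b_j (λ_j a_j + 1) γ_{i,j}² ), where γ_{i,j} = γ_i λ_j/(1 + γ_i λ_j). -/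
open Matrix Filter

/-- The matrix `A = I_M + γ1 ∑_{j∈I1} λ_j u_j u_jᵀ + γ2 ∑_{j∈I2} λ_j u_j u_jᵀ`,
whose inverse is the spectrally-corrected and regularized matrix `C̃ = A⁻¹`. -/
noncomputable def regA {M : ℕ} {ι₁ ι₂ : Type*} [Fintype ι₁] [Fintype ι₂]
    (γ1 γ2 : ℝ) (lam : ι₁ ⊕ ι₂ → ℝ) (u : ι₁ ⊕ ι₂ → Fin M → ℝ) :
    Matrix (Fin M) (Fin M) ℝ :=
  1 + γ1 • ∑ j : ι₁, lam (Sum.inl j) • vecMulVec (u (Sum.inl j)) (u (Sum.inl j))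
    + γ2 • ∑ j : ι₂, lam (Sum.inr j) • vecMulVec (u (Sum.inr j)) (u (Sum.inr j))

/-- The spiked population covariance matrix `Σ = σ²(I_M + ∑_{j∈I} λ_j v_j v_jᵀ)`. -/
noncomputable def spiked {M : ℕ} {ι : Type*} [Fintype ι] (σ2 : ℝ) (lam : ι → ℝ)
    (v : ι → Fin M → ℝ) : Matrix (Fin M) (Fin M) ℝ :=
  σ2 • ((1 : Matrix (Fin M) (Fin M) ℝ) + ∑ j : ι, lam j • vecMulVec (v j) (v j))

namespace Thm1Aux

lemma transpose_vmv {M : ℕ} (a b : Fin M → ℝ) : (vecMulVec a b)ᵀ = vecMulVec b a := by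
  ext i j; simp [vecMulVec_apply, mul_comm]

lemma vmv_mulVec {M : ℕ} (a b x : Fin M → ℝ) : vecMulVec a b *ᵥ x = (b ⬝ᵥ x) • a := by
  ext i
  simp only [mulVec, vecMulVec_apply, dotProduct, Pi.smul_apply, smul_eq_mul, Finset.sum_mul]
  exact Finset.sum_congr rfl fun j _ => by ring

lemma vmv_mul_vmv {M : ℕ} (a b c d : Fin M → ℝ) :
    vecMulVec a b * vecMulVec c d = (b ⬝ᵥ c) • vecMulVec a d := by
  ext i k
  simp only [Matrix.mul_apply, vecMulVec_apply, Matrix.smul_apply, smul_eq_mul, dotProduct,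
    Finset.sum_mul]
  exact Finset.sum_congr rfl fun j _ => by ring

lemma sum_mulVec' {M : ℕ} {ι : Type*} (s : Finset ι) (f : ι → Matrix (Fin M) (Fin M) ℝ)
    (x : Fin M → ℝ) : (∑ j ∈ s, f j) *ᵥ x = ∑ j ∈ s, f j *ᵥ x := by
  ext i
  simp only [mulVec, dotProduct, Matrix.sum_apply, Finset.sum_apply, Finset.sum_mul]
  rw [Finset.sum_comm]

lemma dotProduct_sum' {M : ℕ} {ι : Type*} (s : Finset ι) (x : Fin M → ℝ) (f : ι → Fin M → ℝ) :
    x ⬝ᵥ (∑ j ∈ s, f j) = ∑ j ∈ s, x ⬝ᵥ f j := by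
  simp only [dotProduct, Finset.sum_apply, Finset.mul_sum]
  rw [Finset.sum_comm]

lemma sum_dotProduct' {M : ℕ} {ι : Type*} (s : Finset ι) (f : ι → Fin M → ℝ) (x : Fin M → ℝ) :
    (∑ j ∈ s, f j) ⬝ᵥ x = ∑ j ∈ s, f j ⬝ᵥ x := by
  simp only [dotProduct, Finset.sum_apply, Finset.sum_mul]
  rw [Finset.sum_comm]

lemma mul_eq_one {M : ℕ} {ι : Type*} [Fintype ι] [DecidableEq ι]
    (d c : ι → ℝ) (u : ι → Fin M → ℝ)
    (hu : ∀ i j, u i ⬝ᵥ u j = if i = j then (1:ℝ) else 0)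
    (hdc : ∀ j, d j - c j - d j * c j = 0) :
    ((1 : Matrix (Fin M) (Fin M) ℝ) + ∑ j, d j • vecMulVec (u j) (u j)) *
      ((1 : Matrix (Fin M) (Fin M) ℝ) - ∑ j, c j • vecMulVec (u j) (u j)) = 1 := by
  have hSS : (∑ j, d j • vecMulVec (u j) (u j)) * (∑ j, c j • vecMulVec (u j) (u j))
      = ∑ j, (d j * c j) • vecMulVec (u j) (u j) := by
    rw [Finset.sum_mul]
    refine Finset.sum_congr rfl fun j _ => ?_
    rw [Finset.mul_sum]
    have : ∀ k ∈ Finset.univ, (d j • vecMulVec (u j) (u j)) * (c k • vecMulVec (u k) (u k))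
        = if k = j then (d j * c j) • vecMulVec (u j) (u j) else 0 := by
      intro k _
      rw [Matrix.smul_mul, Matrix.mul_smul, vmv_mul_vmv, hu]
      by_cases h : k = j
      · subst h; simp [smul_smul, mul_comm]
      · simp [Ne.symm h, h]
    rw [Finset.sum_congr rfl this, Finset.sum_ite_eq' Finset.univ j
      (fun _ => (d j * c j) • vecMulVec (u j) (u j))]
    simp
  rw [mul_sub, mul_one, add_mul, one_mul, hSS]
  have h2 : (∑ j, d j • vecMulVec (u j) (u j)) - (∑ j, c j • vecMulVec (u j) (u j))
      - (∑ j, (d j * c j) • vecMulVec (u j) (u j)) = 0 := by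
    rw [← Finset.sum_sub_distrib, ← Finset.sum_sub_distrib]
    refine Finset.sum_eq_zero fun j _ => ?_
    rw [← sub_smul, ← sub_smul, hdc, zero_smul]
  linear_combination (norm := abel) h2

noncomputable def cf {ι₁ ι₂ : Type*} (γ1 γ2 : ℝ) (lam : ι₁ ⊕ ι₂ → ℝ) : ι₁ ⊕ ι₂ → ℝ
  | .inl j => γ1 * lam (.inl j) / (1 + γ1 * lam (.inl j))
  | .inr j => γ2 * lam (.inr j) / (1 + γ2 * lam (.inr j))

noncomputable def df {ι₁ ι₂ : Type*} (γ1 γ2 : ℝ) (lam : ι₁ ⊕ ι₂ → ℝ) : ι₁ ⊕ ι₂ → ℝ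
  | .inl j => γ1 * lam (.inl j)
  | .inr j => γ2 * lam (.inr j)

lemma regA_eq {M : ℕ} {ι₁ ι₂ : Type*} [Fintype ι₁] [Fintype ι₂]
    (γ1 γ2 : ℝ) (lam : ι₁ ⊕ ι₂ → ℝ) (u : ι₁ ⊕ ι₂ → Fin M → ℝ) :
    regA γ1 γ2 lam u = 1 + ∑ j, df γ1 γ2 lam j • vecMulVec (u j) (u j) := by
  rw [regA, Fintype.sum_sum_type, Finset.smul_sum, Finset.smul_sum]
  simp only [df, smul_smul]
  abel

lemma scalar_eq {M : ℕ} {ι : Type*} [Fintype ι] [DecidableEq ι]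
    (σ2 : ℝ) (lam c : ι → ℝ) (u v : ι → Fin M → ℝ)
    (hu : ∀ i j, u i ⬝ᵥ u j = if i = j then (1:ℝ) else 0) :
    (1 : Fin M → ℝ) ⬝ᵥ (((1 : Matrix (Fin M) (Fin M) ℝ) - ∑ j, c j • vecMulVec (u j) (u j)) *ᵥ
      (spiked σ2 lam v *ᵥ (((1 : Matrix (Fin M) (Fin M) ℝ) - ∑ j, c j • vecMulVec (u j) (u j)) *ᵥ 1)))
    = σ2 * (((M : ℝ) - 2 * ∑ j, c j * (((1 : Fin M → ℝ) ⬝ᵥ u j) * (u j ⬝ᵥ (1 : Fin M → ℝ)))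
        + ∑ j, (c j)^2 * (((1 : Fin M → ℝ) ⬝ᵥ u j) * (u j ⬝ᵥ (1 : Fin M → ℝ))))
      + ∑ k, lam k * (((1 : Fin M → ℝ) ⬝ᵥ v k)
          - ∑ j, c j * (((1 : Fin M → ℝ) ⬝ᵥ u j) * (u j ⬝ᵥ v k)))^2) := by
  set B : Matrix (Fin M) (Fin M) ℝ := (1 : Matrix (Fin M) (Fin M) ℝ)
      - ∑ j, c j • vecMulVec (u j) (u j) with hB
  set w : Fin M → ℝ := (1 : Fin M → ℝ) - ∑ j, (c j * (u j ⬝ᵥ (1 : Fin M → ℝ))) • u j with hwdef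
  have hw : B *ᵥ (1 : Fin M → ℝ) = w := by
    rw [hB, sub_mulVec, one_mulVec, sum_mulVec' Finset.univ]
    congr 1
    refine Finset.sum_congr rfl fun j _ => ?_
    rw [smul_mulVec, vmv_mulVec, smul_smul]
  have hBT : Bᵀ = B := by
    rw [hB, transpose_sub, transpose_one, Matrix.transpose_sum]
    congr 1
    refine Finset.sum_congr rfl fun j _ => ?_
    rw [transpose_smul, transpose_vmv]
  have hdot : ∀ x : Fin M → ℝ, (1 : Fin M → ℝ) ⬝ᵥ (B *ᵥ x) = w ⬝ᵥ x := by
    intro x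
    rw [dotProduct_mulVec, ← mulVec_transpose, hBT, hw]
  have hSig : spiked σ2 lam v *ᵥ w = σ2 • (w + ∑ k, (lam k * (v k ⬝ᵥ w)) • v k) := by
    rw [spiked, smul_mulVec, add_mulVec, one_mulVec, sum_mulVec' Finset.univ]
    congr 2
    refine Finset.sum_congr rfl fun k _ => ?_
    rw [smul_mulVec, vmv_mulVec, smul_smul]
  have hs1 : (1 : Fin M → ℝ) ⬝ᵥ (1 : Fin M → ℝ) = (M : ℝ) := by
    simp [dotProduct]
  have hvw : ∀ k, v k ⬝ᵥ w = ((1 : Fin M → ℝ) ⬝ᵥ v k)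
      - ∑ j, c j * (((1 : Fin M → ℝ) ⬝ᵥ u j) * (u j ⬝ᵥ v k)) := by
    intro k
    rw [hwdef, dotProduct_sub, dotProduct_comm (v k) (1 : Fin M → ℝ),
      dotProduct_sum' Finset.univ]
    congr 1
    refine Finset.sum_congr rfl fun j _ => ?_
    rw [dotProduct_smul, smul_eq_mul, dotProduct_comm (v k) (u j),
      dotProduct_comm (u j) (1 : Fin M → ℝ)]
    ring
  have A1 : (∑ j, (c j * (u j ⬝ᵥ (1 : Fin M → ℝ))) • u j) ⬝ᵥ (1 : Fin M → ℝ)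
      = ∑ j, c j * (((1 : Fin M → ℝ) ⬝ᵥ u j) * (u j ⬝ᵥ (1 : Fin M → ℝ))) := by
    rw [sum_dotProduct' Finset.univ]
    refine Finset.sum_congr rfl fun j _ => ?_
    rw [smul_dotProduct, smul_eq_mul, dotProduct_comm (u j) (1 : Fin M → ℝ)]
    ring
  have A2 : (1 : Fin M → ℝ) ⬝ᵥ (∑ j, (c j * (u j ⬝ᵥ (1 : Fin M → ℝ))) • u j)
      = ∑ j, c j * (((1 : Fin M → ℝ) ⬝ᵥ u j) * (u j ⬝ᵥ (1 : Fin M → ℝ))) := by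
    rw [dotProduct_sum' Finset.univ]
    refine Finset.sum_congr rfl fun j _ => ?_
    rw [dotProduct_smul, smul_eq_mul]
    ring
  have A3 : (∑ j, (c j * (u j ⬝ᵥ (1 : Fin M → ℝ))) • u j)
        ⬝ᵥ (∑ j, (c j * (u j ⬝ᵥ (1 : Fin M → ℝ))) • u j)
      = ∑ j, (c j)^2 * (((1 : Fin M → ℝ) ⬝ᵥ u j) * (u j ⬝ᵥ (1 : Fin M → ℝ))) := by
    rw [sum_dotProduct' Finset.univ]
    refine Finset.sum_congr rfl fun j _ => ?_
    rw [smul_dotProduct, dotProduct_sum' Finset.univ, smul_eq_mul]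
    have key : ∀ k ∈ Finset.univ, u j ⬝ᵥ (c k * (u k ⬝ᵥ (1 : Fin M → ℝ))) • u k
        = if k = j then c j * (u j ⬝ᵥ (1 : Fin M → ℝ)) else 0 := by
      intro k _
      rw [dotProduct_smul, smul_eq_mul, hu]
      by_cases h : j = k
      · subst h; simp
      · rw [if_neg h, if_neg (fun hh => h hh.symm)]; ring
    rw [Finset.sum_congr rfl key, Finset.sum_ite_eq' Finset.univ j
      (fun _ => c j * (u j ⬝ᵥ (1 : Fin M → ℝ)))]
    simp only [Finset.mem_univ, if_pos]
    rw [dotProduct_comm (u j) (1 : Fin M → ℝ)]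
    ring
  have hww : w ⬝ᵥ w = (M : ℝ)
      - 2 * ∑ j, c j * (((1 : Fin M → ℝ) ⬝ᵥ u j) * (u j ⬝ᵥ (1 : Fin M → ℝ)))
      + ∑ j, (c j)^2 * (((1 : Fin M → ℝ) ⬝ᵥ u j) * (u j ⬝ᵥ (1 : Fin M → ℝ))) := by
    rw [hwdef, dotProduct_sub, sub_dotProduct, sub_dotProduct, hs1, A1, A2, A3]
    ring
  calc (1 : Fin M → ℝ) ⬝ᵥ (B *ᵥ (spiked σ2 lam v *ᵥ (B *ᵥ 1)))
      = w ⬝ᵥ (spiked σ2 lam v *ᵥ w) := by rw [hw, hdot]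
    _ = σ2 * (w ⬝ᵥ w + ∑ k, lam k * (v k ⬝ᵥ w)^2) := by
        rw [hSig, dotProduct_smul, smul_eq_mul, dotProduct_add, dotProduct_sum' Finset.univ]
        congr 2
        refine Finset.sum_congr rfl fun k _ => ?_
        rw [dotProduct_smul, smul_eq_mul, dotProduct_comm w (v k)]
        ring
    _ = _ := by
        rw [hww]
        have : ∀ k ∈ (Finset.univ : Finset ι), lam k * (v k ⬝ᵥ w)^2
            = lam k * (((1 : Fin M → ℝ) ⬝ᵥ v k)
              - ∑ j, c j * (((1 : Fin M → ℝ) ⬝ᵥ u j) * (u j ⬝ᵥ v k)))^2 := fun k _ => by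
          rw [hvw]
        rw [Finset.sum_congr rfl this]

lemma limit_eq {ι₁ ι₂ : Type*} [Fintype ι₁] [Fintype ι₂] (σ2 γ1 γ2 : ℝ)
    (lam a β : ι₁ ⊕ ι₂ → ℝ) :
    σ2 * ((1 - 2 * ∑ j : ι₁ ⊕ ι₂, cf γ1 γ2 lam j * (a j * β j ^ 2)
        + ∑ j : ι₁ ⊕ ι₂, (cf γ1 γ2 lam j) ^ 2 * (a j * β j ^ 2))
      + ∑ k : ι₁ ⊕ ι₂, lam k * (β k - cf γ1 γ2 lam k * (a k * β k)) ^ 2)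
    = σ2 * (1 + ∑ j : ι₁ ⊕ ι₂, lam j * (β j) ^ 2
        - 2 * ((∑ j : ι₁, (lam (Sum.inl j) + 1) * a (Sum.inl j) * (β (Sum.inl j)) ^ 2 *
                  (γ1 * lam (Sum.inl j) / (1 + γ1 * lam (Sum.inl j))))
             + (∑ j : ι₂, (lam (Sum.inr j) + 1) * a (Sum.inr j) * (β (Sum.inr j)) ^ 2 *
                  (γ2 * lam (Sum.inr j) / (1 + γ2 * lam (Sum.inr j)))))
        + ((∑ j : ι₁, a (Sum.inl j) * (β (Sum.inl j)) ^ 2 * (lam (Sum.inl j) * a (Sum.inl j) + 1) *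
                  (γ1 * lam (Sum.inl j) / (1 + γ1 * lam (Sum.inl j))) ^ 2)
         + (∑ j : ι₂, a (Sum.inr j) * (β (Sum.inr j)) ^ 2 * (lam (Sum.inr j) * a (Sum.inr j) + 1) *
                  (γ2 * lam (Sum.inr j) / (1 + γ2 * lam (Sum.inr j))) ^ 2))) := by
  have E : ∑ j : ι₁ ⊕ ι₂, (-2 * (cf γ1 γ2 lam j * (a j * β j ^ 2))
        + (cf γ1 γ2 lam j) ^ 2 * (a j * β j ^ 2)
        + lam j * (β j - cf γ1 γ2 lam j * (a j * β j)) ^ 2)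
      = ∑ j : ι₁ ⊕ ι₂, (lam j * β j ^ 2
        - 2 * ((lam j + 1) * a j * β j ^ 2 * cf γ1 γ2 lam j)
        + a j * β j ^ 2 * (lam j * a j + 1) * (cf γ1 γ2 lam j) ^ 2) :=
    Finset.sum_congr rfl fun j _ => by ring
  have D1 : ∑ j : ι₁ ⊕ ι₂, (-2 * (cf γ1 γ2 lam j * (a j * β j ^ 2))
        + (cf γ1 γ2 lam j) ^ 2 * (a j * β j ^ 2)
        + lam j * (β j - cf γ1 γ2 lam j * (a j * β j)) ^ 2)
      = -2 * ∑ j : ι₁ ⊕ ι₂, cf γ1 γ2 lam j * (a j * β j ^ 2)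
        + ∑ j : ι₁ ⊕ ι₂, (cf γ1 γ2 lam j) ^ 2 * (a j * β j ^ 2)
        + ∑ j : ι₁ ⊕ ι₂, lam j * (β j - cf γ1 γ2 lam j * (a j * β j)) ^ 2 := by
    rw [Finset.sum_add_distrib, Finset.sum_add_distrib, ← Finset.mul_sum]
  have D2 : ∑ j : ι₁ ⊕ ι₂, (lam j * β j ^ 2
        - 2 * ((lam j + 1) * a j * β j ^ 2 * cf γ1 γ2 lam j)
        + a j * β j ^ 2 * (lam j * a j + 1) * (cf γ1 γ2 lam j) ^ 2)
      = ∑ j : ι₁ ⊕ ι₂, lam j * β j ^ 2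
        - 2 * ∑ j : ι₁ ⊕ ι₂, (lam j + 1) * a j * β j ^ 2 * cf γ1 γ2 lam j
        + ∑ j : ι₁ ⊕ ι₂, a j * β j ^ 2 * (lam j * a j + 1) * (cf γ1 γ2 lam j) ^ 2 := by
    rw [Finset.sum_add_distrib, Finset.sum_sub_distrib, ← Finset.mul_sum]
  have S1 : ∑ j : ι₁ ⊕ ι₂, (lam j + 1) * a j * β j ^ 2 * cf γ1 γ2 lam j
      = (∑ j : ι₁, (lam (Sum.inl j) + 1) * a (Sum.inl j) * (β (Sum.inl j)) ^ 2 *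
            (γ1 * lam (Sum.inl j) / (1 + γ1 * lam (Sum.inl j))))
        + (∑ j : ι₂, (lam (Sum.inr j) + 1) * a (Sum.inr j) * (β (Sum.inr j)) ^ 2 *
            (γ2 * lam (Sum.inr j) / (1 + γ2 * lam (Sum.inr j)))) := by
    rw [Fintype.sum_sum_type]; rfl
  have S2 : ∑ j : ι₁ ⊕ ι₂, a j * β j ^ 2 * (lam j * a j + 1) * (cf γ1 γ2 lam j) ^ 2
      = (∑ j : ι₁, a (Sum.inl j) * (β (Sum.inl j)) ^ 2 * (lam (Sum.inl j) * a (Sum.inl j) + 1) *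
            (γ1 * lam (Sum.inl j) / (1 + γ1 * lam (Sum.inl j))) ^ 2)
        + (∑ j : ι₂, a (Sum.inr j) * (β (Sum.inr j)) ^ 2 * (lam (Sum.inr j) * a (Sum.inr j) + 1) *
            (γ2 * lam (Sum.inr j) / (1 + γ2 * lam (Sum.inr j))) ^ 2) := by
    rw [Fintype.sum_sum_type]; rfl
  linear_combination σ2 * E - σ2 * D1 + σ2 * D2 - 2 * σ2 * S1 + σ2 * S2

end Thm1Aux

open Thm1Aux in
/-- Theorem 1, Y part, deterministic form: under the convergence
hypotheses (i)–(iv) on the projections of the orthonormal families `u^{(n)}`, `v^{(n)}`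
(with `b_j = β_j²`), the quantity `Y_n = (1ᵀ C̃_n Σ_n C̃_n 1)/M_n` converges to
`Ȳ(γ1,γ2) = σ²(1 + ∑_j λ_j b_j − 2 ∑_{i,j} (λ_j+1) a_j b_j γ_{i,j}
            + ∑_{i,j} a_j b_j (λ_j a_j + 1) γ_{i,j}²)`,
where `γ_{i,j} = γ_i λ_j/(1 + γ_i λ_j)`. -/
theorem thm1_Y_part {ι₁ ι₂ : Type*} [Fintype ι₁] [Fintype ι₂]
    [DecidableEq ι₁] [DecidableEq ι₂]
    (σ2 : ℝ) (hσ : 0 < σ2) (γ1 γ2 : ℝ) (lam : ι₁ ⊕ ι₂ → ℝ)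
    (h1 : ∀ j : ι₁, 1 + γ1 * lam (Sum.inl j) ≠ 0)
    (h2 : ∀ j : ι₂, 1 + γ2 * lam (Sum.inr j) ≠ 0)
    (a β : ι₁ ⊕ ι₂ → ℝ)
    (Mn : ℕ → ℕ) (hMn : Tendsto Mn atTop atTop)
    (u v : ∀ n, ι₁ ⊕ ι₂ → Fin (Mn n) → ℝ)
    (hu : ∀ n, ∀ i j : ι₁ ⊕ ι₂, u n i ⬝ᵥ u n j = if i = j then 1 else 0)
    (hv : ∀ n, ∀ i j : ι₁ ⊕ ι₂, v n i ⬝ᵥ v n j = if i = j then 1 else 0)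
    (hi : ∀ j : ι₁ ⊕ ι₂,
      Tendsto (fun n => (((1 : Fin (Mn n) → ℝ) ⬝ᵥ u n j) * (u n j ⬝ᵥ (1 : Fin (Mn n) → ℝ))) / (Mn n : ℝ))
        atTop (nhds (a j * (β j) ^ 2)))
    (hii : ∀ j k l : ι₁ ⊕ ι₂,
      Tendsto (fun n => (v n k ⬝ᵥ u n j) * (u n j ⬝ᵥ v n l))
        atTop (nhds (if k = j ∧ l = j then a j else 0)))
    (hiii : ∀ j k : ι₁ ⊕ ι₂,
      Tendsto (fun n => ((1 : Fin (Mn n) → ℝ) ⬝ᵥ u n j) * (u n j ⬝ᵥ v n k) / Real.sqrt (Mn n))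
        atTop (nhds (if k = j then a j * β j else 0)))
    (hiv : ∀ j : ι₁ ⊕ ι₂,
      Tendsto (fun n => ((1 : Fin (Mn n) → ℝ) ⬝ᵥ v n j) / Real.sqrt (Mn n))
        atTop (nhds (β j))) :
    Tendsto
      (fun n => ((1 : Fin (Mn n) → ℝ) ⬝ᵥ ((regA γ1 γ2 lam (u n))⁻¹ *ᵥ
          (spiked σ2 lam (v n) *ᵥ ((regA γ1 γ2 lam (u n))⁻¹ *ᵥ (1 : Fin (Mn n) → ℝ))))) / (Mn n : ℝ))
      atTop
      (nhds (σ2 * (1 + ∑ j : ι₁ ⊕ ι₂, lam j * (β j) ^ 2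
        - 2 * ((∑ j : ι₁, (lam (Sum.inl j) + 1) * a (Sum.inl j) * (β (Sum.inl j)) ^ 2 *
                  (γ1 * lam (Sum.inl j) / (1 + γ1 * lam (Sum.inl j))))
             + (∑ j : ι₂, (lam (Sum.inr j) + 1) * a (Sum.inr j) * (β (Sum.inr j)) ^ 2 *
                  (γ2 * lam (Sum.inr j) / (1 + γ2 * lam (Sum.inr j)))))
        + ((∑ j : ι₁, a (Sum.inl j) * (β (Sum.inl j)) ^ 2 * (lam (Sum.inl j) * a (Sum.inl j) + 1) *
                  (γ1 * lam (Sum.inl j) / (1 + γ1 * lam (Sum.inl j))) ^ 2)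
         + (∑ j : ι₂, a (Sum.inr j) * (β (Sum.inr j)) ^ 2 * (lam (Sum.inr j) * a (Sum.inr j) + 1) *
                  (γ2 * lam (Sum.inr j) / (1 + γ2 * lam (Sum.inr j))) ^ 2))))) := by
  set c : ι₁ ⊕ ι₂ → ℝ := cf γ1 γ2 lam with hc
  -- inverse formula
  have hdc : ∀ j, df γ1 γ2 lam j - c j - df γ1 γ2 lam j * c j = 0 := by
    intro j
    cases j with
    | inl j =>
        have hne := h1 j
        simp only [hc, df, cf]
        field_simp
        ring
    | inr j =>
        have hne := h2 j
        simp only [hc, df, cf]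
        field_simp
        ring
  have hinv : ∀ n, (regA γ1 γ2 lam (u n))⁻¹
      = (1 : Matrix (Fin (Mn n)) (Fin (Mn n)) ℝ)
        - ∑ j, c j • vecMulVec (u n j) (u n j) := by
    intro n
    refine Matrix.inv_eq_right_inv ?_
    rw [regA_eq]
    exact mul_eq_one (df γ1 γ2 lam) c (u n) (hu n) hdc
  -- auxiliary scalar sequences
  set q : (ι₁ ⊕ ι₂) → ℕ → ℝ := fun j n =>
    (((1 : Fin (Mn n) → ℝ) ⬝ᵥ u n j) * (u n j ⬝ᵥ (1 : Fin (Mn n) → ℝ))) / (Mn n : ℝ) with hq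
  set r : (ι₁ ⊕ ι₂) → ℕ → ℝ := fun k n =>
    ((1 : Fin (Mn n) → ℝ) ⬝ᵥ v n k) / Real.sqrt (Mn n)
      - ∑ j, c j * (((1 : Fin (Mn n) → ℝ) ⬝ᵥ u n j) * (u n j ⬝ᵥ v n k) / Real.sqrt (Mn n)) with hr
  set G : ℕ → ℝ := fun n =>
    σ2 * ((1 - 2 * ∑ j, c j * q j n + ∑ j, (c j) ^ 2 * q j n) + ∑ k, lam k * (r k n) ^ 2) with hG
  -- Tendsto of G
  have hqlim : ∀ j, Tendsto (fun n => q j n) atTop (nhds (a j * β j ^ 2)) := fun j => hi j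
  have hrlim : ∀ k, Tendsto (fun n => r k n) atTop (nhds (β k - c k * (a k * β k))) := by
    intro k
    have hsum : Tendsto (fun n => ∑ j, c j * (((1 : Fin (Mn n) → ℝ) ⬝ᵥ u n j)
        * (u n j ⬝ᵥ v n k) / Real.sqrt (Mn n))) atTop
        (nhds (∑ j, c j * (if k = j then a j * β j else 0))) := by
      refine tendsto_finset_sum _ fun j _ => ?_
      exact (hiii j k).const_mul (c j)
    have hval : ∑ j, c j * (if k = j then a j * β j else 0) = c k * (a k * β k) := by
      rw [Finset.sum_congr rfl (fun j _ => mul_ite (k = j) (c j) (a j * β j) 0)]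
      simp [Finset.sum_ite_eq]
    rw [hval] at hsum
    exact (hiv k).sub hsum
  have hGlim : Tendsto G atTop (nhds (σ2 * ((1 - 2 * ∑ j, c j * (a j * β j ^ 2)
      + ∑ j, (c j) ^ 2 * (a j * β j ^ 2))
      + ∑ k, lam k * (β k - c k * (a k * β k)) ^ 2))) := by
    apply Tendsto.const_mul
    refine Tendsto.add ?_ ?_
    · refine Tendsto.add ?_ ?_
      · refine Tendsto.sub tendsto_const_nhds ?_
        refine Tendsto.const_mul 2 ?_
        exact tendsto_finset_sum _ fun j _ => (hqlim j).const_mul (c j)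
      · exact tendsto_finset_sum _ fun j _ => (hqlim j).const_mul ((c j) ^ 2)
    · exact tendsto_finset_sum _ fun k _ => (((hrlim k).pow 2).const_mul (lam k))
  -- eventual equality with the target sequence
  have heq : G =ᶠ[atTop] (fun n => ((1 : Fin (Mn n) → ℝ) ⬝ᵥ ((regA γ1 γ2 lam (u n))⁻¹ *ᵥ
      (spiked σ2 lam (v n) *ᵥ ((regA γ1 γ2 lam (u n))⁻¹ *ᵥ (1 : Fin (Mn n) → ℝ))))) / (Mn n : ℝ)) := by
    filter_upwards [hMn.eventually_ge_atTop 1] with n hn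
    have hMpos : (0 : ℝ) < (Mn n : ℝ) := by exact_mod_cast hn
    have hMne : (Mn n : ℝ) ≠ 0 := ne_of_gt hMpos
    have hsqrtpos : 0 < Real.sqrt (Mn n) := Real.sqrt_pos.mpr hMpos
    have hsqrtne : Real.sqrt (Mn n) ≠ 0 := ne_of_gt hsqrtpos
    have hsq : Real.sqrt (Mn n) ^ 2 = (Mn n : ℝ) := Real.sq_sqrt hMpos.le
    rw [hinv n, scalar_eq σ2 lam c (u n) (v n) (hu n)]
    -- rewrite r k n as a single quotient
    have hrk : ∀ k, r k n = (((1 : Fin (Mn n) → ℝ) ⬝ᵥ v n k)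
        - ∑ j, c j * (((1 : Fin (Mn n) → ℝ) ⬝ᵥ u n j) * (u n j ⬝ᵥ v n k))) / Real.sqrt (Mn n) := by
      intro k
      rw [hr]
      simp only
      rw [sub_div]
      congr 1
      rw [Finset.sum_div]
      exact Finset.sum_congr rfl fun j _ => (mul_div_assoc _ _ _).symm
    have hrk2 : ∀ k, (r k n) ^ 2 = (((1 : Fin (Mn n) → ℝ) ⬝ᵥ v n k)
        - ∑ j, c j * (((1 : Fin (Mn n) → ℝ) ⬝ᵥ u n j) * (u n j ⬝ᵥ v n k))) ^ 2 / (Mn n : ℝ) := by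
      intro k
      rw [hrk k, div_pow, hsq]
    have hsum1 : ∑ j, c j * q j n
        = (∑ j, c j * (((1 : Fin (Mn n) → ℝ) ⬝ᵥ u n j) * (u n j ⬝ᵥ (1 : Fin (Mn n) → ℝ)))) / (Mn n : ℝ) := by
      rw [Finset.sum_div]
      exact Finset.sum_congr rfl fun j _ => (mul_div_assoc _ _ _).symm.trans rfl
    have hsum2 : ∑ j, (c j) ^ 2 * q j n
        = (∑ j, (c j) ^ 2 * (((1 : Fin (Mn n) → ℝ) ⬝ᵥ u n j) * (u n j ⬝ᵥ (1 : Fin (Mn n) → ℝ)))) / (Mn n : ℝ) := by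
      rw [Finset.sum_div]
      exact Finset.sum_congr rfl fun j _ => (mul_div_assoc _ _ _).symm.trans rfl
    have hsum3 : ∑ k, lam k * (r k n) ^ 2
        = (∑ k, lam k * (((1 : Fin (Mn n) → ℝ) ⬝ᵥ v n k)
            - ∑ j, c j * (((1 : Fin (Mn n) → ℝ) ⬝ᵥ u n j) * (u n j ⬝ᵥ v n k))) ^ 2) / (Mn n : ℝ) := by
      rw [Finset.sum_div]
      refine Finset.sum_congr rfl fun k _ => ?_
      rw [hrk2 k, mul_div_assoc]
    rw [hG]
    simp only
    rw [hsum1, hsum2, hsum3]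
    field_simp
  refine Tendsto.congr' heq ?_
  rw [hc] at *
  have := limit_eq (ι₁ := ι₁) (ι₂ := ι₂) σ2 γ1 γ2 lam a β
  rw [← this]
  exact hGlim
end

section
/- (Theorem 6, eigenvalue inversion, positive spikes.) Let J ∈ (0,1), σ² > 0, and λ > √J. Set s = σ²(1 + λ)(1 + J/λ) and t = s/σ². Then (t + 1 − J)² − 4t ≥ 0 and λ = (t + 1 − J + √((t + 1 − J)² − 4t))/2 − 1. -/
/-- Theorem 6, eigenvalue inversion, positive spikes: for
`J ∈ (0,1)`, `σ² > 0` and `λ > √J`, setting `s = σ²(1+λ)(1+J/λ)` and `t = s/σ²`,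
one has `(t+1−J)² − 4t ≥ 0` and `λ = (t+1−J+√((t+1−J)²−4t))/2 − 1`. -/
theorem eigenvalue_inversion_pos (J σ2 lam s t : ℝ)
    (hJ : J ∈ Set.Ioo (0 : ℝ) 1) (hσ : 0 < σ2) (hlam : Real.sqrt J < lam)
    (hs : s = σ2 * (1 + lam) * (1 + J / lam)) (ht : t = s / σ2) :
    0 ≤ (t + 1 - J) ^ 2 - 4 * t ∧
    lam = (t + 1 - J + Real.sqrt ((t + 1 - J) ^ 2 - 4 * t)) / 2 - 1 := by
  obtain ⟨hJ0, hJ1⟩ := hJ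
  have hsq : 0 < Real.sqrt J := Real.sqrt_pos.mpr hJ0
  have hl0 : 0 < lam := hsq.trans hlam
  have hl2 : J < lam ^ 2 := by
    have := Real.sq_sqrt hJ0.le
    nlinarith [Real.sqrt_nonneg J]
  have htval : t = (1 + lam) * (1 + J / lam) := by
    rw [ht, hs]; field_simp
  have hdisc : (t + 1 - J) ^ 2 - 4 * t = (lam - J / lam) ^ 2 := by
    rw [htval]; field_simp; ring
  have hpos : 0 ≤ lam - J / lam := by
    rw [sub_nonneg, div_le_iff₀ hl0]
    nlinarith
  constructor
  · rw [hdisc]; positivity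
  · rw [hdisc, Real.sqrt_sq hpos, htval]
    field_simp
    ring
end

section
/- (Eigenvalue inversion, negative spikes.) Let J ∈ (0,1), σ² > 0, and λ ∈ (−1, −√J). Set s = σ²(1 + λ)(1 + J/λ) and t = s/σ². Then (t + 1 − J)² − 4t ≥ 0 and λ = (t + 1 − J − √((t + 1 − J)² − 4t))/2 − 1. -/
/-- eigenvalue inversion, negative spikes: for `J ∈ (0,1)`, `σ² > 0`
and `λ ∈ (−1, −√J)`, setting `s = σ²(1+λ)(1+J/λ)` and `t = s/σ²`, one has
`(t+1−J)² − 4t ≥ 0` and `λ = (t+1−J−√((t+1−J)²−4t))/2 − 1`. -/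
theorem eigenvalue_inversion_neg (J σ2 lam s t : ℝ)
    (hJ : J ∈ Set.Ioo (0 : ℝ) 1) (hσ : 0 < σ2)
    (hlam : lam ∈ Set.Ioo (-1 : ℝ) (-Real.sqrt J))
    (hs : s = σ2 * (1 + lam) * (1 + J / lam)) (ht : t = s / σ2) :
    0 ≤ (t + 1 - J) ^ 2 - 4 * t ∧
    lam = (t + 1 - J - Real.sqrt ((t + 1 - J) ^ 2 - 4 * t)) / 2 - 1 := by
  obtain ⟨hJ0, hJ1⟩ := hJ
  obtain ⟨hl1, hl2⟩ := hlam
  have hsqJ : 0 < Real.sqrt J := Real.sqrt_pos.mpr hJ0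
  have hlneg : lam < 0 := lt_of_lt_of_le hl2 (by linarith)
  have hlne : lam ≠ 0 := ne_of_lt hlneg
  have ht' : t = (1 + lam) * (1 + J / lam) := by
    rw [ht, hs]; field_simp
  have hJlt : J < lam ^ 2 := by
    have h : Real.sqrt J < -lam := by linarith
    have := pow_lt_pow_left₀ h (le_of_lt hsqJ) two_ne_zero
    rw [Real.sq_sqrt (le_of_lt hJ0)] at this; nlinarith
  have hpos : 0 < J / lam - lam := by
    have : J / lam - lam = (J - lam ^ 2) / lam := by field_simp
    rw [this]
    exact div_pos_of_neg_of_neg (by linarith) hlneg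
  have key : (t + 1 - J) ^ 2 - 4 * t = (J / lam - lam) ^ 2 := by
    rw [ht']; field_simp; ring
  constructor
  · rw [key]; positivity
  · rw [key, Real.sqrt_sq (le_of_lt hpos), ht']
    field_simp
    ring
end
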